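/- Let K ≥ 2 and let p, q be probability vectors in the (K-1)-simplex. Define the Brier score s(p, q) = ∑_{k=1}^K [(q_k - p_k)·(2 q_k) - (q_k^2 - 1/K)]. Then for any fixed p, sup over q in the simplex of s(p, q) is minimized (over p in the simplex) uniquely at the uniform distribution p_k = 1/K. -/
import Mathlib


open scoped BigOperators

/-- The Brier score `s(p,q) = ∑ k, (q k - p k) * (2 q k) - (q k ^ 2 - 1/K)`. -/
noncomputable def brierScore (K : ℕ) (p q : Fin K → ℝ) : ℝ :=
  ∑ k, ((q k - p k) * (2 * q k) - ((q k) ^ 2 - (K : ℝ)⁻¹))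

/-- The worst-case (sup over the simplex) Brier score of prediction `p`. -/
noncomputable def brierSup (K : ℕ) (p : Fin K → ℝ) : ℝ :=
  sSup ((fun q => brierScore K p q) '' stdSimplex ℝ (Fin K))

lemma score_eq (K : ℕ) (hK : K ≠ 0) (p q : Fin K → ℝ) :
    brierScore K p q = (∑ k, (q k) ^ 2) - 2 * (∑ k, p k * q k) + 1 := by
  unfold brierScore
  have h1 : (∑ _k : Fin K, (K : ℝ)⁻¹) = 1 := by
    rw [Finset.sum_const, Finset.card_univ, Fintype.card_fin, nsmul_eq_mul]
    field_simp
  have : ∀ k, (q k - p k) * (2 * q k) - ((q k) ^ 2 - (K : ℝ)⁻¹)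
      = ((q k) ^ 2 - 2 * (p k * q k)) + (K : ℝ)⁻¹ := by intro k; ring
  simp_rw [this, Finset.sum_add_distrib, h1, Finset.sum_sub_distrib,
    ← Finset.mul_sum]

lemma single_mem (K : ℕ) (k : Fin K) : Pi.single k (1 : ℝ) ∈ stdSimplex ℝ (Fin K) := by
  constructor
  · intro j
    by_cases h : j = k
    · subst h; simp
    · simp [Pi.single_apply, h]
  · simp [Pi.single_apply]

lemma sum_sq_le (K : ℕ) (q : Fin K → ℝ) (hq : q ∈ stdSimplex ℝ (Fin K)) :
    (∑ k, (q k) ^ 2) ≤ 1 := by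
  have h1 : ∀ k, q k ≤ 1 := by
    intro k
    calc q k ≤ ∑ j, q j := Finset.single_le_sum (fun j _ => hq.1 j) (Finset.mem_univ k)
    _ = 1 := hq.2
  calc (∑ k, (q k) ^ 2) ≤ ∑ k, q k := by
        apply Finset.sum_le_sum
        intro k _
        have := hq.1 k
        nlinarith [h1 k]
    _ = 1 := hq.2

lemma score_single (K : ℕ) (hK : K ≠ 0) (p : Fin K → ℝ) (k : Fin K) :
    brierScore K p ((Pi.single k 1 : Fin K → ℝ)) = 2 - 2 * p k := by
  rw [score_eq K hK]
  have h1 : (∑ j, ((Pi.single k 1 : Fin K → ℝ) j) ^ 2) = 1 := by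
    rw [Finset.sum_eq_single k]
    · simp
    · intro j _ hj; simp [Pi.single_apply, hj]
    · simp
  have h2 : (∑ j, p j * (Pi.single k 1 : Fin K → ℝ) j) = p k := by
    rw [Finset.sum_eq_single k]
    · simp
    · intro j _ hj; simp [Pi.single_apply, hj]
    · simp
  rw [h1, h2]; ring

lemma bdd (K : ℕ) (hK : K ≠ 0) (p : Fin K → ℝ) (hp : p ∈ stdSimplex ℝ (Fin K)) :
    BddAbove ((fun q => brierScore K p q) '' stdSimplex ℝ (Fin K)) := by
  refine ⟨2, ?_⟩
  rintro x ⟨q, hq, rfl⟩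
  simp only
  rw [score_eq K hK]
  have h1 := sum_sq_le K q hq
  have h2 : 0 ≤ ∑ k, p k * q k :=
    Finset.sum_nonneg fun k _ => mul_nonneg (hp.1 k) (hq.1 k)
  linarith

lemma le_brierSup (K : ℕ) (hK : K ≠ 0) (p : Fin K → ℝ) (hp : p ∈ stdSimplex ℝ (Fin K))
    (k : Fin K) : 2 - 2 * p k ≤ brierSup K p := by
  rw [← score_single K hK p k]
  exact le_csSup (bdd K hK p hp) ⟨_, single_mem K k, rfl⟩

lemma unif_mem (K : ℕ) (hK : K ≠ 0) :
    (fun _ => (K : ℝ)⁻¹) ∈ stdSimplex ℝ (Fin K) := by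
  constructor
  · intro k; positivity
  · rw [Finset.sum_const, Finset.card_univ, Fintype.card_fin, nsmul_eq_mul]
    field_simp

lemma brierSup_unif (K : ℕ) (hK : K ≠ 0) :
    brierSup K (fun _ => (K : ℝ)⁻¹) = 2 - 2 * (K : ℝ)⁻¹ := by
  apply le_antisymm
  · apply csSup_le
    · exact ⟨_, ⟨_, unif_mem K hK, rfl⟩⟩
    · rintro x ⟨q, hq, rfl⟩
      simp only
      rw [score_eq K hK]
      have h1 := sum_sq_le K q hq
      have h2 : (∑ k, (K : ℝ)⁻¹ * q k) = (K : ℝ)⁻¹ := by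
        rw [← Finset.mul_sum, hq.2, mul_one]
      rw [h2]; linarith
  · exact le_brierSup K hK _ (unif_mem K hK) ⟨0, by omega⟩

/-- over the simplex, the worst-case Brier score is uniquely
minimized at the uniform distribution. -/
theorem stmt1 (K : ℕ) (hK : 2 ≤ K) :
    ∀ p ∈ stdSimplex ℝ (Fin K),
      brierSup K (fun _ => (K : ℝ)⁻¹) ≤ brierSup K p ∧
        (brierSup K p = brierSup K (fun _ => (K : ℝ)⁻¹) →
          p = fun _ => (K : ℝ)⁻¹) := by
  have hK0 : K ≠ 0 := by omega
  have hsum : (∑ _k : Fin K, (K : ℝ)⁻¹) = 1 := by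
    rw [Finset.sum_const, Finset.card_univ, Fintype.card_fin, nsmul_eq_mul]
    field_simp
  haveI : Nonempty (Fin K) := ⟨⟨0, by omega⟩⟩
  intro p hp
  constructor
  · rw [brierSup_unif K hK0]
    -- there is k with p k ≤ 1/K
    by_contra h
    push_neg at h
    have hall : ∀ k, (K : ℝ)⁻¹ < p k := by
      intro k
      by_contra hk
      push_neg at hk
      have := le_brierSup K hK0 p hp k
      linarith
    have : (∑ _k : Fin K, (K : ℝ)⁻¹) < ∑ k, p k := by
      apply Finset.sum_lt_sum_of_nonempty
      · exact Finset.univ_nonempty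
      · intro k _; exact hall k
    rw [hsum, hp.2] at this
    linarith
  · intro heq
    rw [brierSup_unif K hK0] at heq
    have hge : ∀ k, (K : ℝ)⁻¹ ≤ p k := by
      intro k
      have := le_brierSup K hK0 p hp k
      rw [heq] at this
      linarith
    funext k
    by_contra hk
    have hlt : (K : ℝ)⁻¹ < p k := lt_of_le_of_ne (hge k) (Ne.symm hk)
    have : (∑ _j : Fin K, (K : ℝ)⁻¹) < ∑ j, p j :=
      Finset.sum_lt_sum (fun j _ => hge j) ⟨k, Finset.mem_univ k, hlt⟩
    rw [hsum, hp.2] at this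
    linarith
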